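/- For the recursively defined sequence (f_n) with n ≥ 1, the ratio of consecutive maxima equals the interval length difference: f_{n+1}(t_n) / f_n(t_{n-1}) = t_n - t_{n-1}. Equivalently, f_{n+1}(t_n) = (t_n - t_{n-1}) · f_n(t_{n-1}). -/
import Mathlib


open MeasureTheory Set

/-- Antisymmetrized extension: `f̃_{n+1}` built from `f_n = g` with times `tn = t_n`, `tn1 = t_{n+1}`. -/
noncomputable def ftilde (g : ℝ → ℝ) (tn tn1 : ℝ) (t : ℝ) : ℝ :=
  if 0 ≤ t ∧ t ≤ tn then g t
  else if tn1 - tn ≤ t ∧ t ≤ tn1 then -g (tn1 - t)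
  else 0

/-- The recursively defined sequence `f_n` (with `f_0 ≡ c`). -/
noncomputable def fseq (ts : ℕ → ℝ) (c : ℝ) : ℕ → ℝ → ℝ
  | 0 => fun _ => c
  | n + 1 => fun t => ∫ s in (0:ℝ)..t, ftilde (fseq ts c n) (ts n) (ts (n + 1)) s

lemma ftilde_meas {g : ℝ → ℝ} (hg : Measurable g) (tn tn1 : ℝ) :
    Measurable (ftilde g tn tn1) := by
  unfold ftilde
  exact Measurable.ite measurableSet_Icc hg
    (Measurable.ite measurableSet_Icc
      ((hg.comp (measurable_const.sub measurable_id)).neg) measurable_const)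

lemma ftilde_intble {g : ℝ → ℝ} (hg : Continuous g) (tn tn1 : ℝ)
    (a b : ℝ) : IntervalIntegrable (ftilde g tn tn1) volume a b := by
  obtain ⟨C, hC⟩ := isCompact_Icc.exists_bound_of_continuousOn (s := Icc 0 tn) hg.continuousOn
  have hb : ∀ t, ‖ftilde g tn tn1 t‖ ≤ max C 0 := by
    intro t
    unfold ftilde
    split_ifs with h1 h2
    · exact le_max_of_le_left (hC t ⟨h1.1, h1.2⟩)
    · rw [norm_neg]
      exact le_max_of_le_left (hC _ ⟨by linarith [h2.2], by linarith [h2.1]⟩)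
    · simp
  have hm := (ftilde_meas hg.measurable tn tn1).aestronglyMeasurable (μ := volume)
  constructor <;>
    exact Measure.integrableOn_of_bounded measure_Ioc_lt_top.ne hm (ae_of_all _ hb)

lemma ftilde_anti {g : ℝ → ℝ} {tn tn1 : ℝ} (h2 : 2 * tn ≤ tn1)
    {t : ℝ} (hA : t ≠ tn) :
    ftilde g tn tn1 (tn1 - t) = - ftilde g tn tn1 t := by
  unfold ftilde
  split_ifs with h1 h2' h3 h4 h5 h6 h7 h8
  all_goals try (rw [sub_sub_cancel])
  all_goals try rfl
  all_goals try (exact absurd (⟨by linarith [h1.1, h1.2], by linarith [h1.1, h1.2]⟩ :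
          tn1 - tn ≤ t ∧ t ≤ tn1) h3)
  all_goals try (exact absurd (⟨by linarith [h4.1, h4.2], by linarith [h4.1, h4.2]⟩ :
          0 ≤ t ∧ t ≤ tn) h5)
  all_goals try (exact absurd (⟨by linarith [h7.1, h7.2], by linarith [h7.1, h7.2]⟩ :
          tn1 - tn ≤ tn1 - t ∧ tn1 - t ≤ tn1) h4)
  all_goals try (exact absurd (⟨by linarith [h8.1, h8.2], by linarith [h8.1, h8.2]⟩ :
          0 ≤ tn1 - t ∧ tn1 - t ≤ tn) h1)
  all_goals try simp
  exact absurd (le_antisymm h2'.2 (by linarith [h1.2])) hA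

lemma fseq_cont (ts : ℕ → ℝ) (c : ℝ) : ∀ n, Continuous (fseq ts c n)
  | 0 => continuous_const
  | (n+1) => by
    have h := fseq_cont ts c n
    show Continuous fun t => ∫ s in (0:ℝ)..t, ftilde (fseq ts c n) (ts n) (ts (n + 1)) s
    exact intervalIntegral.continuous_primitive
      (fun a b => ftilde_intble h (ts n) (ts (n+1)) a b) 0

/-- Symmetry of the primitive of an (a.e.) antisymmetric function. -/
lemma primitive_symm {f : ℝ → ℝ} {tn tn1 : ℝ}
    (hint : ∀ a b, IntervalIntegrable f volume a b)
    (hanti : ∀ t, t ≠ tn → f (tn1 - t) = - f t) :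
    ∀ s, ∫ u in (0:ℝ)..(tn1 - s), f u = ∫ u in (0:ℝ)..s, f u := by
  have key2 : ∀ a b : ℝ, ∫ u in (tn1 - b)..(tn1 - a), f u = - ∫ u in a..b, f u := by
    intro a b
    rw [← intervalIntegral.integral_comp_sub_left f tn1, ← intervalIntegral.integral_neg]
    refine intervalIntegral.integral_congr_ae ?_
    filter_upwards [Countable.ae_notMem (Set.countable_singleton tn) volume] with x hx _
    exact hanti x hx
  have hF0 : ∫ u in (0:ℝ)..tn1, f u = 0 := by
    have h := key2 0 tn1
    simp only [sub_self, sub_zero] at h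
    linarith
  intro s
  have hadd := intervalIntegral.integral_add_adjacent_intervals
    (hint 0 (tn1 - s)) (hint (tn1 - s) tn1)
  have h3 : ∫ u in (tn1 - s)..tn1, f u = - ∫ u in (0:ℝ)..s, f u := by
    have h := key2 0 s
    simpa using h
  rw [hF0] at hadd
  linarith

lemma fseq_symm (ts : ℕ → ℝ) (c : ℝ) (hts : ∀ n, 2 * ts n ≤ ts (n + 1)) :
    ∀ n s, fseq ts c n (ts n - s) = fseq ts c n s
  | 0, s => rfl
  | (n+1), s => by
    show (∫ u in (0:ℝ)..(ts (n+1) - s), ftilde (fseq ts c n) (ts n) (ts (n + 1)) u)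
      = ∫ u in (0:ℝ)..s, ftilde (fseq ts c n) (ts n) (ts (n + 1)) u
    exact primitive_symm
      (fun a b => ftilde_intble (fseq_cont ts c n) (ts n) (ts (n+1)) a b)
      (fun t ht => ftilde_anti (hts n) ht) s

lemma fseq_val (ts : ℕ → ℝ) (c : ℝ) (ht0 : 0 < ts 0)
    (hts : ∀ n, 2 * ts n ≤ ts (n + 1)) (n : ℕ) :
    fseq ts c (n + 2) (ts (n + 1)) = (ts (n + 1) - ts n) * fseq ts c (n + 1) (ts n) := by
  have tpos : ∀ m, 0 < ts m := by
    intro m; induction m with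
    | zero => exact ht0
    | succ k ih => linarith [hts k]
  set tn := ts n with htn
  set tn1 := ts (n + 1) with htn1
  have h2 : 2 * tn ≤ tn1 := hts n
  have h0n : (0:ℝ) ≤ tn := (tpos n).le
  have h0n1 : (0:ℝ) ≤ tn1 := (tpos (n + 1)).le
  have htt : tn ≤ tn1 - tn := by linarith
  set g := fseq ts c n with hg
  set F := fseq ts c (n + 1) with hF
  have hgc : Continuous g := fseq_cont ts c n
  have hFc : Continuous F := fseq_cont ts c (n + 1)
  have hFdef : ∀ t, F t = ∫ u in (0:ℝ)..t, ftilde g tn tn1 u := fun t => rfl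
  -- step 1: outer integral reduces to integral of F
  have step1 : fseq ts c (n + 2) tn1 = ∫ s in (0:ℝ)..tn1, F s := by
    show (∫ s in (0:ℝ)..tn1, ftilde F tn1 (ts (n + 2)) s) = _
    refine intervalIntegral.integral_congr fun s hs => ?_
    rw [uIcc_of_le h0n1] at hs
    unfold ftilde
    rw [if_pos ⟨hs.1, hs.2⟩]
  -- F agrees with the primitive of g on [0, tn]
  have hFG : ∀ s, 0 ≤ s → s ≤ tn → F s = ∫ u in (0:ℝ)..s, g u := by
    intro s hs0 hstn
    rw [hFdef]
    refine intervalIntegral.integral_congr fun u hu => ?_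
    rw [uIcc_of_le hs0] at hu
    unfold ftilde
    rw [if_pos ⟨hu.1, le_trans hu.2 hstn⟩]
  set G := fun s => ∫ u in (0:ℝ)..s, g u with hGdef
  have hGc : Continuous G := intervalIntegral.continuous_primitive
    (fun a b => hgc.intervalIntegrable a b) 0
  -- symmetry identity for G
  have step6 : ∀ s, G (tn - s) = G tn - G s := by
    intro s
    have hadd := intervalIntegral.integral_add_adjacent_intervals (μ := volume)
      (hgc.intervalIntegrable 0 (tn - s)) (hgc.intervalIntegrable (tn - s) tn)
    have hsym : ∫ u in (tn - s)..tn, g u = G s := by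
      have h := intervalIntegral.integral_comp_sub_left g tn (a := 0) (b := s)
      rw [sub_zero] at h
      rw [← h]
      exact intervalIntegral.integral_congr fun u _ => fseq_symm ts c hts n u
    rw [hsym] at hadd
    simp only [hGdef]
    linarith
  -- ∫₀^tn G
  have step7 : ∫ s in (0:ℝ)..tn, G s = tn * G tn / 2 := by
    have hcomp : ∫ s in (0:ℝ)..tn, G (tn - s) = ∫ s in (0:ℝ)..tn, G s := by
      have h := intervalIntegral.integral_comp_sub_left G tn (a := 0) (b := tn)
      rw [sub_zero, sub_self] at h
      exact h
    have hadd : ∫ s in (0:ℝ)..tn, (G s + G (tn - s))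
        = (∫ s in (0:ℝ)..tn, G s) + ∫ s in (0:ℝ)..tn, G (tn - s) :=
      intervalIntegral.integral_add (μ := volume) (hGc.intervalIntegrable 0 tn)
        ((hGc.comp (continuous_const.sub continuous_id)).intervalIntegrable 0 tn)
    have hconst : ∫ s in (0:ℝ)..tn, (G s + G (tn - s)) = tn * G tn := by
      rw [intervalIntegral.integral_congr (g := fun _ => G tn)
        (fun s _ => by rw [step6 s]; ring)]
      rw [intervalIntegral.integral_const, sub_zero, smul_eq_mul]
    linarith [hadd, hconst, hcomp]
  have hFtnG : F tn = G tn := hFG tn h0n le_rfl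
  have hInt0tn : ∫ s in (0:ℝ)..tn, F s = tn * F tn / 2 := by
    rw [intervalIntegral.integral_congr (g := G) (fun s hs => by
      rw [uIcc_of_le h0n] at hs; exact hFG s hs.1 hs.2)]
    rw [step7, hFtnG]
  -- F constant on middle interval
  have hconstmid : ∀ s, tn ≤ s → s ≤ tn1 - tn → F s = F tn := by
    intro s h1 h2'
    have hadd := intervalIntegral.integral_add_adjacent_intervals
      (ftilde_intble hgc tn tn1 0 tn) (ftilde_intble hgc tn tn1 tn s)
    have hz : ∫ u in tn..s, ftilde g tn tn1 u = 0 := by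
      rw [intervalIntegral.integral_congr_ae (g := fun _ => (0:ℝ)) ?_,
        intervalIntegral.integral_zero]
      filter_upwards [Countable.ae_notMem (Set.countable_singleton (tn1 - tn)) volume]
        with x hx hmem
      rw [Set.uIoc_of_le h1] at hmem
      unfold ftilde
      rw [if_neg, if_neg]
      · exact fun hcon =>
          absurd (le_antisymm (le_trans hmem.2 h2') hcon.1)
            (by simpa using hx)
      · exact fun hcon => absurd hcon.2 (not_le.mpr hmem.1)
    rw [hFdef s, hFdef tn, ← hadd, hz, add_zero]
  have hmid : ∫ s in tn..(tn1 - tn), F s = (tn1 - 2 * tn) * F tn := by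
    rw [intervalIntegral.integral_congr (g := fun _ => F tn) (fun s hs => by
      rw [uIcc_of_le htt] at hs; exact hconstmid s hs.1 hs.2)]
    rw [intervalIntegral.integral_const, smul_eq_mul]
    ring
  -- last segment equals the first
  have hlast : ∫ s in (tn1 - tn)..tn1, F s = ∫ s in (0:ℝ)..tn, F s := by
    have h := intervalIntegral.integral_comp_sub_left F tn1 (a := 0) (b := tn)
    rw [sub_zero] at h
    rw [← h]
    exact intervalIntegral.integral_congr fun u _ => fseq_symm ts c hts (n + 1) u
  have hsplit1 := intervalIntegral.integral_add_adjacent_intervals (μ := volume)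
    (hFc.intervalIntegrable 0 tn) (hFc.intervalIntegrable tn (tn1 - tn))
  have hsplit2 := intervalIntegral.integral_add_adjacent_intervals (μ := volume)
    (hFc.intervalIntegrable 0 (tn1 - tn)) (hFc.intervalIntegrable (tn1 - tn) tn1)
  rw [step1, ← hsplit2, ← hsplit1, hlast, hmid, hInt0tn]
  ring

theorem fseq_ratio (ts : ℕ → ℝ) (c : ℝ) (hc : 0 < c) (ht0 : 0 < ts 0)
    (hts : ∀ n, 2 * ts n ≤ ts (n + 1)) :
    ∀ n : ℕ, 0 < fseq ts c (n + 1) (ts n) →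
      fseq ts c (n + 2) (ts (n + 1)) / fseq ts c (n + 1) (ts n) = ts (n + 1) - ts n ∧
      fseq ts c (n + 2) (ts (n + 1)) = (ts (n + 1) - ts n) * fseq ts c (n + 1) (ts n) := by
  intro n hpos
  have hval := fseq_val ts c ht0 hts n
  exact ⟨by rw [hval, mul_div_assoc, div_self hpos.ne', mul_one], hval⟩
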